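/- Maximin value via convex hull: let S ⊆ ℝ^d (d = M−1) be a nonempty compact set of divergence vectors of deterministic quantizers, and let C = convexHull(S) be the set of divergence vectors achievable by randomized quantizers. Then sup over v ∈ C of (min over coordinates of v) is attained, and it is attained at a point of C that can be written as a convex combination of at most d points of S. -/

import Mathlib

/-!
The minimum coordinate is upper semicontinuous and the convex hull of a compact set in finite
dimension is compact, so a maximizer `v` exists. Moving from `v` along `(1, …, 1)` raises every
coordinate, so `v` lies on the boundary of the hull. By Carathéodory, `v` is a positive combination
of affinely independent points of `S`; were there `d + 1` of them, they would form an affine basis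
in which `v` has positive barycentric coordinates, putting `v` in the interior of their simplex.
-/

open Set Module Filter Topology

theorem exists_fin_pos_convex_span_of_mem_convexHull {𝕜 E : Type*} [Field 𝕜] [LinearOrder 𝕜]
    [IsStrictOrderedRing 𝕜] [AddCommGroup E] [Module 𝕜 E] [FiniteDimensional 𝕜 E]
    {s : Set E} {x : E} (hx : x ∈ convexHull 𝕜 s) :
    ∃ n ≤ finrank 𝕜 E + 1, ∃ (w : Fin n → 𝕜) (z : Fin n → E), (∀ i, z i ∈ s) ∧
      AffineIndependent 𝕜 z ∧ (∀ i, 0 < w i) ∧ ∑ i, w i = 1 ∧ ∑ i, w i • z i = x := by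
  obtain ⟨ι, _, z, w, hzs, hz, hw, hw1, rfl⟩ := eq_pos_convex_span_of_mem_convexHull hx
  let e := (Fintype.equivFin ι).symm
  refine ⟨Fintype.card ι, ?_, w ∘ e, z ∘ e, fun i ↦ hzs ⟨_, rfl⟩, hz.comp_embedding e.toEmbedding,
    fun i ↦ hw _, by rw [← hw1, ← e.sum_comp]; rfl, by rw [← e.sum_comp]; rfl⟩
  exact hz.card_le_finrank_succ.trans (Nat.succ_le_succ (Submodule.finrank_le _))

theorem convexHull_eq_iUnion_image_stdSimplex {E : Type*} [AddCommGroup E] [Module ℝ E]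
    [FiniteDimensional ℝ E] (s : Set E) :
    convexHull ℝ s = ⋃ n : Fin (finrank ℝ E + 2),
      (fun p : (Fin n → ℝ) × (Fin n → E) ↦ ∑ i, p.1 i • p.2 i) ''
        (stdSimplex ℝ (Fin n) ×ˢ univ.pi fun _ ↦ s) := by
  refine Subset.antisymm ?_ ?_
  · intro x hx
    obtain ⟨n, hn, w, z, hzs, -, hw, hw1, rfl⟩ := exists_fin_pos_convex_span_of_mem_convexHull hx
    exact mem_iUnion.2 ⟨⟨n, Nat.lt_succ_of_le hn⟩, (w, z),
      ⟨⟨fun i ↦ (hw i).le, hw1⟩, fun i _ ↦ hzs i⟩, rfl⟩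
  · simp only [iUnion_subset_iff, image_subset_iff]
    rintro n ⟨w, z⟩ ⟨⟨hw, hw1⟩, hz⟩
    exact (convex_convexHull ℝ s).sum_mem (fun i _ ↦ hw i) hw1
      fun i _ ↦ subset_convexHull ℝ s (hz i (mem_univ i))

theorem IsCompact.convexHull {E : Type*} [NormedAddCommGroup E] [NormedSpace ℝ E]
    [FiniteDimensional ℝ E] {s : Set E} (hs : IsCompact s) : IsCompact (convexHull ℝ s) := by
  rw [convexHull_eq_iUnion_image_stdSimplex]
  exact isCompact_iUnion fun n ↦ ((isCompact_stdSimplex _ _).prod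
    (isCompact_univ_pi fun _ ↦ hs)).image (by fun_prop)

theorem AffineIndependent.card_le_finrank_of_notMem_interior_convexHull {ι E : Type*}
    [Fintype ι] [NormedAddCommGroup E] [NormedSpace ℝ E] [FiniteDimensional ℝ E]
    {z : ι → E} (hz : AffineIndependent ℝ z) {w : ι → ℝ} (hw : ∀ i, 0 < w i)
    (hw1 : ∑ i, w i = 1) (hx : ∑ i, w i • z i ∉ interior (convexHull ℝ (range z))) :
    Fintype.card ι ≤ finrank ℝ E := by
  by_contra! hlt
  have hcard : Fintype.card ι = finrank ℝ E + 1 :=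
    le_antisymm (hz.card_le_finrank_succ.trans (Nat.succ_le_succ (Submodule.finrank_le _))) hlt
  let b : AffineBasis ι ℝ E := ⟨z, hz, hz.affineSpan_eq_top_iff_card_eq_finrank_add_one.2 hcard⟩
  refine hx ?_
  rw [show range z = range b from rfl, b.interior_convexHull]
  intro i
  rw [← Finset.univ.affineCombination_eq_linear_combination z w hw1]
  exact (b.coord_apply_combination_of_mem (Finset.mem_univ i) hw1).symm ▸ hw i

theorem exists_fin_convex_span_card_le_finrank_of_notMem_interior {E : Type*}
    [NormedAddCommGroup E] [NormedSpace ℝ E] [FiniteDimensional ℝ E] {s : Set E} {x : E}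
    (hx : x ∈ convexHull ℝ s) (hx' : x ∉ interior (convexHull ℝ s)) :
    ∃ n ≤ finrank ℝ E, ∃ (w : Fin n → ℝ) (z : Fin n → E),
      (∀ i, z i ∈ s) ∧ (∀ i, 0 ≤ w i) ∧ ∑ i, w i = 1 ∧ x = ∑ i, w i • z i := by
  obtain ⟨n, -, w, z, hzs, hz, hw, hw1, rfl⟩ := exists_fin_pos_convex_span_of_mem_convexHull hx
  have hzs' : range z ⊆ s := range_subset_iff.2 hzs
  refine ⟨n, ?_, w, z, hzs, fun i ↦ (hw i).le, hw1, rfl⟩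
  simpa using hz.card_le_finrank_of_notMem_interior_convexHull hw hw1
    fun h ↦ hx' (interior_mono (convexHull_mono hzs') h)

theorem upperSemicontinuous_iInf_apply {ι : Type*} [Finite ι] :
    UpperSemicontinuous fun v : ι → ℝ ↦ ⨅ i, v i :=
  upperSemicontinuous_ciInf (fun v ↦ (finite_range v).bddBelow)
    fun i ↦ (continuous_apply i).upperSemicontinuous

theorem notMem_interior_of_isMaxOn_iInf {ι : Type*} [Finite ι] [Nonempty ι] {C : Set (ι → ℝ)}
    {v : ι → ℝ} (hv : IsMaxOn (fun u : ι → ℝ ↦ ⨅ i, u i) C v) : v ∉ interior C := by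
  intro hvC
  have hshift : ∀ᶠ t in 𝓝[>] (0 : ℝ), v + t • 1 ∈ C := by
    refine nhdsWithin_le_nhds ?_
    have : Continuous fun t : ℝ ↦ v + t • 1 := by fun_prop
    exact this.continuousAt.preimage_mem_nhds (by simpa using mem_interior_iff_mem_nhds.1 hvC)
  obtain ⟨t, htC, ht⟩ := (hshift.and self_mem_nhdsWithin).exists
  have hmin_shift : (⨅ i, v i) + t ≤ ⨅ i, (v + t • 1) i :=
    le_ciInf fun i ↦ by simpa using ciInf_le (finite_range v).bddBelow i
  exact (isMaxOn_iff.1 hv _ htC).not_gt (by linarith)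

/-- Maximin value via convex hull: over the convex hull `C` of a nonempty compact set `S ⊆ ℝ^d`
of divergence vectors, the supremum of the minimum coordinate is attained, at a point that is a
convex combination of at most `d` points of `S`. -/
theorem stmt4 (d : ℕ) (hd : 0 < d) (S : Set (Fin d → ℝ)) (hS : S.Nonempty)
    (hSc : IsCompact S) :
    ∃ v ∈ convexHull ℝ S,
      (∀ u ∈ convexHull ℝ S, (⨅ i, u i) ≤ ⨅ i, v i) ∧
      ∃ n : ℕ, n ≤ d ∧ ∃ (wt : Fin n → ℝ) (z : Fin n → (Fin d → ℝ)),
        (∀ i, z i ∈ S) ∧ (∀ i, 0 ≤ wt i) ∧ (∑ i, wt i = 1) ∧ v = ∑ i, wt i • z i := by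
  have : Nonempty (Fin d) := ⟨⟨0, hd⟩⟩
  obtain ⟨v, hvC, hvmax⟩ :=
    UpperSemicontinuousOn.exists_isMaxOn (hS.mono (subset_convexHull ℝ S)) hSc.convexHull
      (upperSemicontinuous_iInf_apply.upperSemicontinuousOn _)
  obtain ⟨n, hn, w, z, hzS, hw, hw1, hvz⟩ :=
    exists_fin_convex_span_card_le_finrank_of_notMem_interior hvC
      (notMem_interior_of_isMaxOn_iInf hvmax)
  exact ⟨v, hvC, fun u hu ↦ hvmax hu, n, by simpa using hn, w, z, hzS, hw, hw1, hvz⟩
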